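/- arXiv:1811.02363 — 2 statements merged into one kernel-verified Lean document; each statement's English description precedes it below -/
import Mathlib

section
/- Let d, n, ρ ≥ 1 be integers and R > 0. Let Ω ⊂ ℤ^d be a finite nonempty pixel set and W ⊂ ℤ^d a finite window with 0 ∈ W. Let ω : ℤ^d → ℝ satisfy 0 ≤ ω(j) ≤ 1 for all j and ω(0) > 0. Let φ : ℝ^ρ → ℝ satisfy φ(x) > 0 for all x and be L-Lipschitz (|φ(x) − φ(y)| ≤ L‖x − y‖ for all x, y ∈ ℝ^ρ) for some L > 0. Let p : ℤ^d → ℝ^ρ and let f : ℤ^d → ℝ^n have all components in [0, R]. Given cluster centers μ_1, …, μ_K ∈ ℝ^ρ and an assignment s : Ω → {1, …, K}, define for i ∈ Ω: ξ(i) = Σ_{j∈W} ω(j) φ(p(i−j) − p(i)) f(i−j), η(i) = Σ_{j∈W} ω(j) φ(p(i−j) − p(i)), v(i) = Σ_{j∈W} ω(j) φ(p(i−j) − μ_{s(i)}) f(i−j), r(i) = Σ_{j∈W} ω(j) φ(p(i−j) − μ_{s(i)}), g(i) = ξ(i)/η(i), ĝ(i) = v(i)/r(i), and the clustering error E_K =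 Σ_{i∈Ω} ‖p(i) − μ_{s(i)}‖². Then Σ_{i∈Ω} ‖ĝ(i) − g(i)‖² ≤ C · L² · n · |W|² · E_K, where C = 4R²/(ω(0)φ(0))² (in particular, such a constant C > 0 depending only on R, ω(0), φ(0) exists). -/
/-!
Both `g i` and `ĝ i` are weighted averages of the same vectors `f (i - j)`, each of norm at most
`√n R`, with weights that differ by at most `ω j · L ‖p i - μ (s i)‖ ≤ L ‖p i - μ (s i)‖`
(Lipschitz continuity of `φ`). Perturbing the weights of a weighted average by `c j` moves it
by at most `2 M ∑ c / ∑ a`, where `M` bounds the vectors and `∑ a` is the total original weight;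
here `∑ a = η i ≥ ω 0 φ 0`, the `j = 0` term. Squaring and summing over `Ω` gives the bound.
-/

open Finset

noncomputable def weightedAvg {ι E : Type*} [AddCommGroup E] [Module ℝ E]
    (s : Finset ι) (w : ι → ℝ) (x : ι → E) : E :=
  (∑ j ∈ s, w j)⁻¹ • ∑ j ∈ s, w j • x j

theorem norm_sum_smul_le_of_abs_le {ι E : Type*} [SeminormedAddCommGroup E] [NormedSpace ℝ E]
    {s : Finset ι} {w c : ι → ℝ} {x : ι → E} {M : ℝ}
    (hw : ∀ j ∈ s, |w j| ≤ c j) (hx : ∀ j ∈ s, ‖x j‖ ≤ M) :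
    ‖∑ j ∈ s, w j • x j‖ ≤ (∑ j ∈ s, c j) * M := by
  rw [sum_mul]
  refine norm_sum_le_of_le s fun j hj => ?_
  rw [norm_smul, Real.norm_eq_abs]
  exact mul_le_mul (hw j hj) (hx j hj) (norm_nonneg _) ((abs_nonneg _).trans (hw j hj))

theorem norm_weightedAvg_sub_weightedAvg_le {ι E : Type*} [SeminormedAddCommGroup E]
    [NormedSpace ℝ E] {s : Finset ι} {a b c : ι → ℝ} {x : ι → E} {M : ℝ}
    (hb : ∀ j ∈ s, 0 ≤ b j) (ha_pos : 0 < ∑ j ∈ s, a j) (hb_pos : 0 < ∑ j ∈ s, b j)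
    (hab : ∀ j ∈ s, |b j - a j| ≤ c j) (hx : ∀ j ∈ s, ‖x j‖ ≤ M) :
    ‖weightedAvg s b x - weightedAvg s a x‖ ≤ 2 * M * (∑ j ∈ s, c j) / ∑ j ∈ s, a j := by
  set A := ∑ j ∈ s, a j
  set B := ∑ j ∈ s, b j
  set X := ∑ j ∈ s, a j • x j
  set Y := ∑ j ∈ s, b j • x j
  have hc : 0 ≤ ∑ j ∈ s, c j := sum_nonneg fun j hj => (abs_nonneg _).trans (hab j hj)
  have hY : ‖Y‖ ≤ B * M :=
    norm_sum_smul_le_of_abs_le (fun j hj => (abs_of_nonneg (hb j hj)).le) hx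
  have hYX : ‖Y - X‖ ≤ (∑ j ∈ s, c j) * M := by
    simp only [Y, X, ← sum_sub_distrib, ← sub_smul]
    exact norm_sum_smul_le_of_abs_le hab hx
  have hBA : |B - A| ≤ ∑ j ∈ s, c j := by
    rw [← sum_sub_distrib]
    exact (abs_sum_le_sum_abs _ _).trans (sum_le_sum hab)
  have hsplit : weightedAvg s b x - weightedAvg s a x
      = (A * B)⁻¹ • ((A - B) • Y + B • (Y - X)) := by
    simp only [weightedAvg, smul_add, smul_sub, smul_smul, sub_smul]
    field_simp
    abel
  calc ‖weightedAvg s b x - weightedAvg s a x‖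
      ≤ (A * B)⁻¹ * (|B - A| * ‖Y‖ + B * ‖Y - X‖) := by
        rw [hsplit, norm_smul, Real.norm_of_nonneg (by positivity), abs_sub_comm]
        gcongr
        refine (norm_add_le _ _).trans_eq ?_
        rw [norm_smul, norm_smul, Real.norm_eq_abs, Real.norm_of_nonneg hb_pos.le]
    _ ≤ (A * B)⁻¹ * ((∑ j ∈ s, c j) * (B * M) + B * ((∑ j ∈ s, c j) * M)) := by
        gcongr
    _ = 2 * M * (∑ j ∈ s, c j) / A := by
        field_simp
        ring

theorem norm_weightedAvg_recenter_le {ι F E : Type*} [SeminormedAddCommGroup F]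
    [SeminormedAddCommGroup E] [NormedSpace ℝ E] {W : Finset ι} {j₀ : ι} (hj₀ : j₀ ∈ W)
    {ω : ι → ℝ} (hω : ∀ j ∈ W, 0 ≤ ω j ∧ ω j ≤ 1) (hωj₀ : 0 < ω j₀)
    {φ : F → ℝ} (hφpos : ∀ y, 0 < φ y) {L : ℝ} (hLip : ∀ y z, |φ y - φ z| ≤ L * ‖y - z‖)
    {q : ι → F} {x : ι → E} {M : ℝ} (hx : ∀ j ∈ W, ‖x j‖ ≤ M) (c : F) :
    ‖weightedAvg W (fun j => ω j * φ (q j - c)) x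
        - weightedAvg W (fun j => ω j * φ (q j - q j₀)) x‖
      ≤ 2 * M * (W.card * (L * ‖q j₀ - c‖)) / (ω j₀ * φ 0) := by
  have hweight (c' : F) : ∀ j ∈ W, 0 ≤ ω j * φ (q j - c') :=
    fun j hj => mul_nonneg (hω j hj).1 (hφpos _).le
  have hA : 0 < ω j₀ * φ 0 := mul_pos hωj₀ (hφpos 0)
  have hA_le : ω j₀ * φ 0 ≤ ∑ j ∈ W, ω j * φ (q j - q j₀) := by
    simpa using single_le_sum (hweight (q j₀)) hj₀
  have hB_pos : 0 < ∑ j ∈ W, ω j * φ (q j - c) :=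
    (mul_pos hωj₀ (hφpos _)).trans_le (single_le_sum (hweight c) hj₀)
  have hweight_diff : ∀ j ∈ W, |ω j * φ (q j - c) - ω j * φ (q j - q j₀)| ≤ L * ‖q j₀ - c‖ := by
    intro j hj
    rw [← mul_sub, abs_mul, abs_of_nonneg (hω j hj).1, ← one_mul (L * _),
      ← sub_sub_sub_cancel_left c (q j₀) (q j)]
    exact mul_le_mul (hω j hj).2 (hLip _ _) (abs_nonneg _) zero_le_one
  have hM : 0 ≤ M := (norm_nonneg _).trans (hx j₀ hj₀)
  have hLc : 0 ≤ L * ‖q j₀ - c‖ := (abs_nonneg _).trans (hLip _ _)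
  calc _ ≤ 2 * M * (∑ _j ∈ W, L * ‖q j₀ - c‖) / ∑ j ∈ W, ω j * φ (q j - q j₀) :=
        norm_weightedAvg_sub_weightedAvg_le (hweight c) (hA.trans_le hA_le) hB_pos hweight_diff hx
    _ ≤ 2 * M * (W.card * (L * ‖q j₀ - c‖)) / (ω j₀ * φ 0) := by
        rw [sum_const, nsmul_eq_mul]
        exact div_le_div_of_nonneg_left (by positivity) hA hA_le

theorem EuclideanSpace.norm_le_sqrt_card_mul_of_abs_le {ι : Type*} [Fintype ι]
    {x : EuclideanSpace ℝ ι} {R : ℝ} (h : ∀ m, |x m| ≤ R) :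
    ‖x‖ ≤ √(Fintype.card ι) * R := by
  rcases isEmpty_or_nonempty ι with hι | ⟨⟨m⟩⟩
  · simp [Subsingleton.elim x 0]
  have hR : 0 ≤ R := (abs_nonneg _).trans (h m)
  rw [EuclideanSpace.norm_eq, ← Real.sqrt_sq hR, ← Real.sqrt_mul (Nat.cast_nonneg _)]
  gcongr
  calc ∑ i, ‖x i‖ ^ 2 ≤ ∑ _i : ι, R ^ 2 := by
        gcongr with i
        rw [Real.norm_eq_abs]
        exact h i
    _ = Fintype.card ι * R ^ 2 := by simp

theorem cluster_filter_error_bound_general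
    (d n ρ : ℕ)
    (R : ℝ)
    (Ω W : Finset (Fin d → ℤ)) (hW : (0 : Fin d → ℤ) ∈ W)
    (ω : (Fin d → ℤ) → ℝ) (hω : ∀ j, 0 ≤ ω j ∧ ω j ≤ 1) (hω0 : 0 < ω 0)
    (φ : EuclideanSpace ℝ (Fin ρ) → ℝ) (hφpos : ∀ x, 0 < φ x)
    (L : ℝ)
    (hLip : ∀ x y : EuclideanSpace ℝ (Fin ρ), |φ x - φ y| ≤ L * ‖x - y‖)
    (p : (Fin d → ℤ) → EuclideanSpace ℝ (Fin ρ))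
    (f : (Fin d → ℤ) → EuclideanSpace ℝ (Fin n))
    (hf : ∀ i m, 0 ≤ f i m ∧ f i m ≤ R)
    (K : ℕ)
    (μ : Fin K → EuclideanSpace ℝ (Fin ρ)) (s : (Fin d → ℤ) → Fin K)
    (ξ : (Fin d → ℤ) → EuclideanSpace ℝ (Fin n))
    (hξ : ∀ i, ξ i = ∑ j ∈ W, (ω j * φ (p (i - j) - p i)) • f (i - j))
    (η : (Fin d → ℤ) → ℝ)
    (hη : ∀ i, η i = ∑ j ∈ W, ω j * φ (p (i - j) - p i))
    (v : (Fin d → ℤ) → EuclideanSpace ℝ (Fin n))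
    (hv : ∀ i, v i = ∑ j ∈ W, (ω j * φ (p (i - j) - μ (s i))) • f (i - j))
    (r : (Fin d → ℤ) → ℝ)
    (hr : ∀ i, r i = ∑ j ∈ W, ω j * φ (p (i - j) - μ (s i)))
    (g ghat : (Fin d → ℤ) → EuclideanSpace ℝ (Fin n))
    (hg : ∀ i, g i = (η i)⁻¹ • ξ i)
    (hghat : ∀ i, ghat i = (r i)⁻¹ • v i)
    (EK : ℝ) (hEK : EK = ∑ i ∈ Ω, ‖p i - μ (s i)‖ ^ 2) :
    ∑ i ∈ Ω, ‖ghat i - g i‖ ^ 2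
      ≤ (4 * R ^ 2 / (ω 0 * φ 0) ^ 2) * L ^ 2 * n * (W.card : ℝ) ^ 2 * EK := by
  have hf_norm (j : Fin d → ℤ) : ‖f j‖ ≤ √n * R := by
    simpa using EuclideanSpace.norm_le_sqrt_card_mul_of_abs_le fun m =>
      (abs_of_nonneg (hf j m).1).trans_le (hf j m).2
  have hpixel (i : Fin d → ℤ) : ‖ghat i - g i‖
      ≤ 2 * (√n * R) * (W.card * (L * ‖p i - μ (s i)‖)) / (ω 0 * φ 0) := by
    rw [hghat, hg, hr, hv, hη, hξ]
    simpa only [sub_zero, weightedAvg] using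
      norm_weightedAvg_recenter_le hW (fun j _ => hω j) hω0 hφpos hLip
        (q := fun j => p (i - j)) (fun j _ => hf_norm (i - j)) (μ (s i))
  calc ∑ i ∈ Ω, ‖ghat i - g i‖ ^ 2
      ≤ ∑ i ∈ Ω, (2 * (√n * R) * (W.card * (L * ‖p i - μ (s i)‖)) / (ω 0 * φ 0)) ^ 2 :=
        sum_le_sum fun i _ => pow_le_pow_left₀ (norm_nonneg _) (hpixel i) 2
    _ = (4 * R ^ 2 / (ω 0 * φ 0) ^ 2) * L ^ 2 * n * (W.card : ℝ) ^ 2 * EK := by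
        rw [hEK, mul_sum]
        refine sum_congr rfl fun i _ => ?_
        simp only [div_pow, mul_pow, Real.sq_sqrt (Nat.cast_nonneg n)]
        ring

/-- Theorem 1 (error bound) for the cluster-by-cluster variant of fast
high-dimensional filtering. -/
theorem cluster_filter_error_bound
    (d n ρ : ℕ) (hd : 1 ≤ d) (hn : 1 ≤ n) (hρ : 1 ≤ ρ)
    (R : ℝ) (hR : 0 < R)
    (Ω W : Finset (Fin d → ℤ)) (hΩ : Ω.Nonempty) (hW : (0 : Fin d → ℤ) ∈ W)
    (ω : (Fin d → ℤ) → ℝ) (hω : ∀ j, 0 ≤ ω j ∧ ω j ≤ 1) (hω0 : 0 < ω 0)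
    (φ : EuclideanSpace ℝ (Fin ρ) → ℝ) (hφpos : ∀ x, 0 < φ x)
    (L : ℝ) (hL : 0 < L)
    (hLip : ∀ x y : EuclideanSpace ℝ (Fin ρ), |φ x - φ y| ≤ L * ‖x - y‖)
    (p : (Fin d → ℤ) → EuclideanSpace ℝ (Fin ρ))
    (f : (Fin d → ℤ) → EuclideanSpace ℝ (Fin n))
    (hf : ∀ i m, 0 ≤ f i m ∧ f i m ≤ R)
    (K : ℕ) (hK : 1 ≤ K)
    (μ : Fin K → EuclideanSpace ℝ (Fin ρ)) (s : (Fin d → ℤ) → Fin K)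
    (ξ : (Fin d → ℤ) → EuclideanSpace ℝ (Fin n))
    (hξ : ∀ i, ξ i = ∑ j ∈ W, (ω j * φ (p (i - j) - p i)) • f (i - j))
    (η : (Fin d → ℤ) → ℝ)
    (hη : ∀ i, η i = ∑ j ∈ W, ω j * φ (p (i - j) - p i))
    (v : (Fin d → ℤ) → EuclideanSpace ℝ (Fin n))
    (hv : ∀ i, v i = ∑ j ∈ W, (ω j * φ (p (i - j) - μ (s i))) • f (i - j))
    (r : (Fin d → ℤ) → ℝ)
    (hr : ∀ i, r i = ∑ j ∈ W, ω j * φ (p (i - j) - μ (s i)))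
    (g ghat : (Fin d → ℤ) → EuclideanSpace ℝ (Fin n))
    (hg : ∀ i, g i = (η i)⁻¹ • ξ i)
    (hghat : ∀ i, ghat i = (r i)⁻¹ • v i)
    (EK : ℝ) (hEK : EK = ∑ i ∈ Ω, ‖p i - μ (s i)‖ ^ 2) :
    ∑ i ∈ Ω, ‖ghat i - g i‖ ^ 2
      ≤ (4 * R ^ 2 / (ω 0 * φ 0) ^ 2) * L ^ 2 * n * (W.card : ℝ) ^ 2 * EK :=
  cluster_filter_error_bound_general d n ρ R Ω W hW ω hω hω0 φ hφpos L hLip p f hf K μ s ξ hξ η hη v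
    hv r hr g ghat hg hghat EK hEK
end

section
/- Let d, n, ρ ≥ 1 be integers and R > 0. Let W ⊂ ℤ^d be a finite window with 0 ∈ W. Let ω : ℤ^d → ℝ satisfy 0 ≤ ω(j) ≤ 1 for all j and ω(0) > 0. Let φ : ℝ^ρ → ℝ satisfy φ(x) > 0 for all x and be L-Lipschitz for some L > 0. Let p : ℤ^d → ℝ^ρ and let f : ℤ^d → ℝ^n have all components in [0, R]. Fix a pixel i ∈ ℤ^d and a center μ ∈ ℝ^ρ, and define ξ(i) = Σ_{j∈W} ω(j) φ(p(i−j) − p(i)) f(i−j), η(i) = Σ_{j∈W} ω(j) φ(p(i−j) − p(i)), v(i) = Σ_{j∈W} ω(j) φ(p(i−j) − μ) f(i−j), r(i) = Σ_{j∈W} ω(j) φ(p(i−j) − μ). Then ‖v(i)/r(i) − ξ(i)/η(i)‖ ≤ (2R/(ω(0)φ(0))) · √n · L · |W| · ‖p(i) − μ‖. -/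
/-!
The two filters are center-of-mass averages of the same values `f (i - j)`, with weights
`a j = ω j φ (p (i - j) - μ)` and `b j = ω j φ (p (i - j) - p i)`. By the Lipschitz bound each
weight moves by at most `L ‖p i - μ‖`, so the weighted sums move by at most `|W| L ‖p i - μ‖ √n R`
and the total weights by at most `|W| L ‖p i - μ‖`; writing `r⁻¹ v - η⁻¹ ξ` as
`η⁻¹ ((v - ξ) + ((η - r) / r) v)` with `‖v‖ ≤ r √n R` gives twice the first quantity over `η`,
and `η ≥ ω 0 φ 0` because the `j = 0` term of `η` is exactly `ω 0 φ 0`.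
-/

open Finset

theorem EuclideanSpace.norm_le_sqrt_card_mul {ι : Type*} [Fintype ι] {x : EuclideanSpace ℝ ι}
    {C : ℝ} (hC : 0 ≤ C) (hx : ∀ m, |x m| ≤ C) : ‖x‖ ≤ √(Fintype.card ι) * C := by
  rw [EuclideanSpace.norm_eq, ← Real.sqrt_sq hC, ← Real.sqrt_mul (Nat.cast_nonneg _),
    ← card_univ, ← nsmul_eq_mul]
  gcongr
  exact sum_le_card_nsmul _ _ _ fun m _ => by
    simpa only [Real.norm_eq_abs, sq_abs] using pow_le_pow_left₀ (abs_nonneg _) (hx m) 2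

theorem abs_mul_sub_mul_le_of_abs_sub_le {F : Type*} [SeminormedAddCommGroup F] {g : F → ℝ}
    {w L : ℝ} (hw₀ : 0 ≤ w) (hw₁ : w ≤ 1) (hg : ∀ x y, |g x - g y| ≤ L * ‖x - y‖) (x y : F) :
    |w * g x - w * g y| ≤ L * ‖x - y‖ := by
  rw [← mul_sub, abs_mul, abs_of_nonneg hw₀]
  exact (mul_le_mul_of_nonneg_right hw₁ (abs_nonneg _)).trans ((one_mul _).trans_le (hg x y))

section CenterMass

variable {ι E : Type*} [NormedAddCommGroup E] [NormedSpace ℝ E]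
  {s : Finset ι} {a b : ι → ℝ} {x : ι → E} {δ M : ℝ}

theorem norm_sum_smul_le_sum_mul (ha : ∀ j ∈ s, 0 ≤ a j) (hx : ∀ j ∈ s, ‖x j‖ ≤ M) :
    ‖∑ j ∈ s, a j • x j‖ ≤ (∑ j ∈ s, a j) * M := by
  rw [sum_mul]
  refine (norm_sum_le _ _).trans (sum_le_sum fun j hj => ?_)
  rw [norm_smul, Real.norm_of_nonneg (ha j hj)]
  exact mul_le_mul_of_nonneg_left (hx j hj) (ha j hj)

theorem abs_sum_sub_sum_le (hab : ∀ j ∈ s, |a j - b j| ≤ δ) :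
    |∑ j ∈ s, a j - ∑ j ∈ s, b j| ≤ #s * δ := by
  rw [← sum_sub_distrib, ← nsmul_eq_mul]
  exact (abs_sum_le_sum_abs _ _).trans (sum_le_card_nsmul _ _ _ hab)

theorem norm_sum_smul_sub_sum_smul_le (hab : ∀ j ∈ s, |a j - b j| ≤ δ)
    (hx : ∀ j ∈ s, ‖x j‖ ≤ M) :
    ‖∑ j ∈ s, a j • x j - ∑ j ∈ s, b j • x j‖ ≤ #s * (δ * M) := by
  rw [← sum_sub_distrib, ← nsmul_eq_mul]
  refine (norm_sum_le _ _).trans (sum_le_card_nsmul _ _ _ fun j hj => ?_)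
  rw [← sub_smul, norm_smul, Real.norm_eq_abs]
  exact mul_le_mul (hab j hj) (hx j hj) (norm_nonneg _) ((abs_nonneg _).trans (hab j hj))

theorem norm_inv_smul_sub_inv_smul_le {r η : ℝ} (hr : 0 < r) (hη : 0 < η) (v ξ : E) :
    ‖r⁻¹ • v - η⁻¹ • ξ‖ ≤ (‖v - ξ‖ + |η - r| * (‖v‖ / r)) / η := by
  have hsplit : r⁻¹ • v - η⁻¹ • ξ = η⁻¹ • ((v - ξ) + ((η - r) / r) • v) := by
    have hcoeff : η⁻¹ * ((η - r) / r) = r⁻¹ - η⁻¹ := by field_simp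
    rw [smul_add, smul_smul, hcoeff, smul_sub, sub_smul]
    abel
  rw [hsplit, norm_smul, Real.norm_of_nonneg (inv_nonneg.2 hη.le), inv_mul_eq_div]
  gcongr
  refine (norm_add_le _ _).trans_eq ?_
  rw [norm_smul, Real.norm_eq_abs, abs_div, abs_of_pos hr]
  ring

theorem norm_centerMass_sub_centerMass_le (ha : ∀ j ∈ s, 0 ≤ a j) (hr : 0 < ∑ j ∈ s, a j)
    (hη : 0 < ∑ j ∈ s, b j) (hab : ∀ j ∈ s, |a j - b j| ≤ δ) (hx : ∀ j ∈ s, ‖x j‖ ≤ M) :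
    ‖s.centerMass a x - s.centerMass b x‖ ≤ 2 * (#s * (δ * M)) / ∑ j ∈ s, b j := by
  have hweights : |∑ j ∈ s, b j - ∑ j ∈ s, a j| * (‖∑ j ∈ s, a j • x j‖ / ∑ j ∈ s, a j)
      ≤ #s * δ * M :=
    mul_le_mul (abs_sum_sub_sum_le fun j hj => abs_sub_comm (a j) (b j) ▸ hab j hj)
      ((div_le_iff₀' hr).2 (norm_sum_smul_le_sum_mul ha hx)) (by positivity)
      ((abs_nonneg _).trans (abs_sum_sub_sum_le hab))
  refine (norm_inv_smul_sub_inv_smul_le hr hη _ _).trans ?_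
  gcongr
  linarith [norm_sum_smul_sub_sum_smul_le (x := x) hab hx]

end CenterMass

theorem pointwise_cluster_error_bound_general
    (d n ρ : ℕ)
    (R : ℝ) (hR : 0 < R)
    (W : Finset (Fin d → ℤ)) (hW : (0 : Fin d → ℤ) ∈ W)
    (ω : (Fin d → ℤ) → ℝ) (hω : ∀ j, 0 ≤ ω j ∧ ω j ≤ 1) (hω0 : 0 < ω 0)
    (φ : EuclideanSpace ℝ (Fin ρ) → ℝ) (hφpos : ∀ x, 0 < φ x)
    (L : ℝ) (hL : 0 < L)
    (hLip : ∀ x y : EuclideanSpace ℝ (Fin ρ), |φ x - φ y| ≤ L * ‖x - y‖)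
    (p : (Fin d → ℤ) → EuclideanSpace ℝ (Fin ρ))
    (f : (Fin d → ℤ) → EuclideanSpace ℝ (Fin n))
    (hf : ∀ i m, 0 ≤ f i m ∧ f i m ≤ R)
    (i : Fin d → ℤ) (μ : EuclideanSpace ℝ (Fin ρ)) :
    ‖(∑ j ∈ W, ω j * φ (p (i - j) - μ))⁻¹ •
        (∑ j ∈ W, (ω j * φ (p (i - j) - μ)) • f (i - j))
      - (∑ j ∈ W, ω j * φ (p (i - j) - p i))⁻¹ •
        (∑ j ∈ W, (ω j * φ (p (i - j) - p i)) • f (i - j))‖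
      ≤ (2 * R / (ω 0 * φ 0)) * Real.sqrt n * L * (W.card : ℝ) * ‖p i - μ‖ := by
  have hweight_nonneg : ∀ q j, 0 ≤ ω j * φ (p (i - j) - q) :=
    fun q j => mul_nonneg (hω j).1 (hφpos _).le
  have hcenter_le : ∀ q, ω 0 * φ (p i - q) ≤ ∑ j ∈ W, ω j * φ (p (i - j) - q) := fun q => by
    simpa using single_le_sum (fun j _ => hweight_nonneg q j) hW
  have hη : ω 0 * φ 0 ≤ ∑ j ∈ W, ω j * φ (p (i - j) - p i) := by
    simpa using hcenter_le (p i)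
  have hf_norm : ∀ j, ‖f j‖ ≤ √n * R := fun j => by
    simpa using EuclideanSpace.norm_le_sqrt_card_mul hR.le fun m =>
      abs_le.2 ⟨(neg_nonpos.2 hR.le).trans (hf j m).1, (hf j m).2⟩
  calc _ ≤ 2 * (#W * (L * ‖p i - μ‖ * (√n * R))) / ∑ j ∈ W, ω j * φ (p (i - j) - p i) :=
        norm_centerMass_sub_centerMass_le (fun j _ => hweight_nonneg μ j)
          ((mul_pos hω0 (hφpos _)).trans_le (hcenter_le μ))
          ((mul_pos hω0 (hφpos 0)).trans_le hη)
          (fun j _ => by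
            simpa only [sub_sub_sub_cancel_left] using
              abs_mul_sub_mul_le_of_abs_sub_le (hω j).1 (hω j).2 hLip
                (p (i - j) - μ) (p (i - j) - p i))
          (fun j _ => hf_norm _)
    _ ≤ 2 * (#W * (L * ‖p i - μ‖ * (√n * R))) / (ω 0 * φ 0) := by
        have := hL.le; have := hR.le
        gcongr
        exact mul_pos hω0 (hφpos 0)
    _ = _ := by ring

/-- Pointwise error bound (inequality (28) in the proof of Theorem 1). -/
theorem pointwise_cluster_error_bound
    (d n ρ : ℕ) (hd : 1 ≤ d) (hn : 1 ≤ n) (hρ : 1 ≤ ρ)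
    (R : ℝ) (hR : 0 < R)
    (W : Finset (Fin d → ℤ)) (hW : (0 : Fin d → ℤ) ∈ W)
    (ω : (Fin d → ℤ) → ℝ) (hω : ∀ j, 0 ≤ ω j ∧ ω j ≤ 1) (hω0 : 0 < ω 0)
    (φ : EuclideanSpace ℝ (Fin ρ) → ℝ) (hφpos : ∀ x, 0 < φ x)
    (L : ℝ) (hL : 0 < L)
    (hLip : ∀ x y : EuclideanSpace ℝ (Fin ρ), |φ x - φ y| ≤ L * ‖x - y‖)
    (p : (Fin d → ℤ) → EuclideanSpace ℝ (Fin ρ))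
    (f : (Fin d → ℤ) → EuclideanSpace ℝ (Fin n))
    (hf : ∀ i m, 0 ≤ f i m ∧ f i m ≤ R)
    (i : Fin d → ℤ) (μ : EuclideanSpace ℝ (Fin ρ)) :
    ‖(∑ j ∈ W, ω j * φ (p (i - j) - μ))⁻¹ •
        (∑ j ∈ W, (ω j * φ (p (i - j) - μ)) • f (i - j))
      - (∑ j ∈ W, ω j * φ (p (i - j) - p i))⁻¹ •
        (∑ j ∈ W, (ω j * φ (p (i - j) - p i)) • f (i - j))‖
      ≤ (2 * R / (ω 0 * φ 0)) * Real.sqrt n * L * (W.card : ℝ) * ‖p i - μ‖ :=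
  pointwise_cluster_error_bound_general d n ρ R hR W hW ω hω hω0 φ hφpos L hL hLip p f hf i μ
end
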